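/- arXiv:2301.06821 — 4 statements merged into one kernel-verified Lean document; each statement's English description precedes it below -/
import Mathlib

section
/- If A and B are 2×2 real upper triangular matrices with non-negative entries and every entry of B is greater than or equal to the corresponding entry of A, then the Euclidean operator norm of A is at most that of B. Moreover, if in addition the upper-right entry of B is strictly greater than that of A, then the norm of A is strictly less than the norm of B. -/
noncomputable def opNormC (A : Matrix (Fin 2) (Fin 2) ℂ) : ℝ :=
  ‖LinearMap.toContinuousLinearMap (Matrix.toEuclideanLin A)‖

noncomputable def opNormR (A : Matrix (Fin 2) (Fin 2) ℝ) : ℝ :=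
  ‖LinearMap.toContinuousLinearMap (Matrix.toEuclideanLin A)‖

namespace Stmt2Aux

noncomputable def T (M : Matrix (Fin 2) (Fin 2) ℝ) :
    EuclideanSpace ℝ (Fin 2) →L[ℝ] EuclideanSpace ℝ (Fin 2) :=
  LinearMap.toContinuousLinearMap (Matrix.toEuclideanLin M)

lemma T_apply (M : Matrix (Fin 2) (Fin 2) ℝ) (x : EuclideanSpace ℝ (Fin 2)) (i : Fin 2) :
    T M x i = M i 0 * x 0 + M i 1 * x 1 := by
  show M.mulVec x i = _
  simp [Matrix.mulVec, dotProduct, Fin.sum_univ_two]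

lemma norm_eq (v : EuclideanSpace ℝ (Fin 2)) : ‖v‖ = Real.sqrt (v 0 ^ 2 + v 1 ^ 2) := by
  rw [EuclideanSpace.norm_eq]
  simp [Fin.sum_univ_two, Real.norm_eq_abs, sq_abs]

lemma norm_T (M : Matrix (Fin 2) (Fin 2) ℝ) (x : EuclideanSpace ℝ (Fin 2)) :
    ‖T M x‖ = Real.sqrt ((M 0 0 * x 0 + M 0 1 * x 1) ^ 2 + (M 1 0 * x 0 + M 1 1 * x 1) ^ 2) := by
  rw [norm_eq, T_apply, T_apply]

noncomputable def vec (a b : ℝ) : EuclideanSpace ℝ (Fin 2) :=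
  (WithLp.equiv 2 (Fin 2 → ℝ)).symm ![a, b]

@[simp] lemma vec_zero (a b : ℝ) : vec a b 0 = a := rfl
@[simp] lemma vec_one (a b : ℝ) : vec a b 1 = b := rfl

lemma exists_max (f : EuclideanSpace ℝ (Fin 2) →L[ℝ] EuclideanSpace ℝ (Fin 2)) :
    ∃ x, ‖x‖ = 1 ∧ ‖f‖ = ‖f x‖ := by
  obtain ⟨x, hx, hmax⟩ := (isCompact_sphere (0 : EuclideanSpace ℝ (Fin 2)) 1).exists_isMaxOn
    (NormedSpace.sphere_nonempty.mpr zero_le_one) (f.continuous.norm.continuousOn)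
  rw [mem_sphere_zero_iff_norm] at hx
  refine ⟨x, hx, le_antisymm (ContinuousLinearMap.opNorm_le_of_unit_norm (norm_nonneg _) ?_) ?_⟩
  · intro y hy
    exact hmax (by rwa [mem_sphere_zero_iff_norm])
  · calc ‖f x‖ ≤ ‖f‖ * ‖x‖ := f.le_opNorm x
      _ = ‖f‖ := by rw [hx, mul_one]

lemma mono_pt (A B : Matrix (Fin 2) (Fin 2) ℝ)
    (hA : A 1 0 = 0) (hB : B 1 0 = 0)
    (hApos : ∀ i j, 0 ≤ A i j) (hBpos : ∀ i j, 0 ≤ B i j)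
    (hle : ∀ i j, A i j ≤ B i j) (x : EuclideanSpace ℝ (Fin 2)) :
    ‖T A x‖ ≤ ‖T B (vec |x 0| |x 1|)‖ := by
  rw [norm_T, norm_T, vec_zero, vec_one, hA, hB]
  apply Real.sqrt_le_sqrt
  have h00 : A 0 0 * x 0 ≤ B 0 0 * |x 0| :=
    le_trans (mul_le_mul_of_nonneg_left (le_abs_self _) (hApos 0 0))
      (mul_le_mul_of_nonneg_right (hle 0 0) (abs_nonneg _))
  have h01 : A 0 1 * x 1 ≤ B 0 1 * |x 1| :=
    le_trans (mul_le_mul_of_nonneg_left (le_abs_self _) (hApos 0 1))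
      (mul_le_mul_of_nonneg_right (hle 0 1) (abs_nonneg _))
  have h11 : A 1 1 * x 1 ≤ B 1 1 * |x 1| :=
    le_trans (mul_le_mul_of_nonneg_left (le_abs_self _) (hApos 1 1))
      (mul_le_mul_of_nonneg_right (hle 1 1) (abs_nonneg _))
  have h00' : -(B 0 0 * |x 0|) ≤ A 0 0 * x 0 := by
    have := mul_le_mul_of_nonneg_left (neg_abs_le (x 0)) (hApos 0 0)
    have := mul_le_mul_of_nonneg_right (hle 0 0) (abs_nonneg (x 0))
    nlinarith
  have h01' : -(B 0 1 * |x 1|) ≤ A 0 1 * x 1 := by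
    have := mul_le_mul_of_nonneg_left (neg_abs_le (x 1)) (hApos 0 1)
    have := mul_le_mul_of_nonneg_right (hle 0 1) (abs_nonneg (x 1))
    nlinarith
  have h11' : -(B 1 1 * |x 1|) ≤ A 1 1 * x 1 := by
    have := mul_le_mul_of_nonneg_left (neg_abs_le (x 1)) (hApos 1 1)
    have := mul_le_mul_of_nonneg_right (hle 1 1) (abs_nonneg (x 1))
    nlinarith
  have k1 : (A 0 0 * x 0 + A 0 1 * x 1) ^ 2 ≤ (B 0 0 * |x 0| + B 0 1 * |x 1|) ^ 2 :=
    sq_le_sq' (by linarith) (by linarith)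
  have k2 : (0 * x 0 + A 1 1 * x 1) ^ 2 ≤ (0 * |x 0| + B 1 1 * |x 1|) ^ 2 := by
    rw [zero_mul, zero_add, zero_mul, zero_add]
    exact sq_le_sq' (by linarith) h11
  linarith

lemma vec_abs_norm (x : EuclideanSpace ℝ (Fin 2)) : ‖vec |x 0| |x 1|‖ = ‖x‖ := by
  rw [norm_eq, norm_eq, vec_zero, vec_one, sq_abs, sq_abs]

lemma aux1 (a b0 b1 ε : ℝ) (hεpos : 0 < ε) (hb0 : 0 < b0) (hb1 : 0 < b1)
    (key : a ^ 2 * ε < b0 * b1) : a ^ 2 * (ε * ε) < 2 * (b0 * b1 * ε) := by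
  have h3 := mul_lt_mul_of_pos_right key hεpos
  have h4 := mul_pos (mul_pos hb0 hb1) hεpos
  nlinarith

lemma aux2 (a b0 b1 c ε : ℝ) (hεpos : 0 < ε) (hb0 : 0 < b0) (hb1 : 0 < b1) (hab : a ≤ b0)
    (ha : 0 < a) (e1 : a ^ 2 ≤ b0 ^ 2) (e2 : a ^ 2 * (ε * ε) < 2 * (b0 * b1 * ε)) :
    a ^ 2 * (1 + ε ^ 2) < (b0 * 1 + b1 * ε) ^ 2 + (0 * 1 + c * ε) ^ 2 := by
  nlinarith [e1, e2, sq_nonneg (b1 * ε), sq_nonneg (c * ε)]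

end Stmt2Aux

open Stmt2Aux

theorem stmt2 (A B : Matrix (Fin 2) (Fin 2) ℝ)
    (hA : A 1 0 = 0) (hB : B 1 0 = 0)
    (hApos : ∀ i j, 0 ≤ A i j) (hBpos : ∀ i j, 0 ≤ B i j)
    (hle : ∀ i j, A i j ≤ B i j) :
    opNormR A ≤ opNormR B ∧ (A 0 1 < B 0 1 → opNormR A < opNormR B) := by
  have hle' : ∀ x : EuclideanSpace ℝ (Fin 2), ‖T A x‖ ≤ ‖T B‖ * ‖x‖ := fun x =>
    calc ‖T A x‖ ≤ ‖T B (vec |x 0| |x 1|)‖ := mono_pt A B hA hB hApos hBpos hle x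
      _ ≤ ‖T B‖ * ‖vec |x 0| |x 1|‖ := (T B).le_opNorm _
      _ = ‖T B‖ * ‖x‖ := by rw [vec_abs_norm]
  have part1 : ‖T A‖ ≤ ‖T B‖ := (T A).opNorm_le_bound (norm_nonneg _) hle'
  refine ⟨part1, fun h01 => ?_⟩
  -- strict part
  obtain ⟨x, hx1, hxmax⟩ := exists_max (T A)
  set y : EuclideanSpace ℝ (Fin 2) := vec |x 0| |x 1| with hy
  have hy1 : ‖y‖ = 1 := by rw [hy, vec_abs_norm, hx1]
  have hTAy : ‖T A y‖ = ‖T A‖ := by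
    refine le_antisymm ?_ ?_
    · calc ‖T A y‖ ≤ ‖T A‖ * ‖y‖ := (T A).le_opNorm _
        _ = ‖T A‖ := by rw [hy1, mul_one]
    · rw [hxmax]
      exact mono_pt A A hA hA hApos hApos (fun i j => le_refl _) x
  have hu0 : (0:ℝ) ≤ |x 0| := abs_nonneg _
  have hu1 : (0:ℝ) ≤ |x 1| := abs_nonneg _
  rcases lt_or_eq_of_le hu1 with hu1pos | hu1zero
  · -- maximizer has positive second coordinate
    have strict : ‖T A y‖ < ‖T B y‖ := by
      rw [norm_T, norm_T, hA, hB, hy, vec_zero, vec_one]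
      apply Real.sqrt_lt_sqrt (by positivity)
      have l1 : 0 ≤ A 0 0 * |x 0| + A 0 1 * |x 1| := by
        have := mul_nonneg (hApos 0 0) hu0
        have := mul_nonneg (hApos 0 1) hu1
        linarith
      have l2 : A 0 0 * |x 0| + A 0 1 * |x 1| < B 0 0 * |x 0| + B 0 1 * |x 1| := by
        have h1 := mul_le_mul_of_nonneg_right (hle 0 0) hu0
        have h2 := mul_lt_mul_of_pos_right h01 hu1pos
        linarith
      have l3 : (A 0 0 * |x 0| + A 0 1 * |x 1|) ^ 2 < (B 0 0 * |x 0| + B 0 1 * |x 1|) ^ 2 := by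
        nlinarith
      nlinarith [l3, mul_le_mul_of_nonneg_right (hle 1 1) hu1,
        mul_nonneg (hApos 1 1) hu1, mul_nonneg (hBpos 1 1) hu1]
    show ‖T A‖ < ‖T B‖
    calc ‖T A‖ = ‖T A y‖ := hTAy.symm
      _ < ‖T B y‖ := strict
      _ ≤ ‖T B‖ * ‖y‖ := (T B).le_opNorm _
      _ = ‖T B‖ := by rw [hy1, mul_one]
  · -- maximizer is (1, 0); so ‖A‖ = A 0 0
    have hx1' : |x 1| = 0 := hu1zero.symm
    have hx0' : |x 0| = 1 := by
      rw [norm_eq, hy, vec_zero, vec_one, hx1'] at hy1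
      have h := hy1
      rw [show (0:ℝ) ^ 2 = 0 by ring, add_zero, Real.sqrt_sq hu0] at h
      exact h
    have hnormA : ‖T A‖ = A 0 0 := by
      rw [← hTAy, norm_T, hy, vec_zero, vec_one, hx0', hx1', hA]
      rw [show A 0 0 * 1 + A 0 1 * 0 = A 0 0 by ring, show (0:ℝ) * 1 + A 1 1 * 0 = 0 by ring]
      rw [show (0:ℝ) ^ 2 = 0 by ring, add_zero, Real.sqrt_sq (hApos 0 0)]
    have hb1 : 0 < B 0 1 := lt_of_le_of_lt (hApos 0 1) h01
    rcases eq_or_lt_of_le (hApos 0 0) with ha0 | ha0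
    · -- A 0 0 = 0 : norm A = 0 < norm B
      show ‖T A‖ < ‖T B‖
      rw [hnormA, ← ha0]
      have : ‖T B (vec 0 1)‖ ≤ ‖T B‖ * ‖vec 0 1‖ := (T B).le_opNorm _
      have hv : ‖vec 0 1‖ = 1 := by
        rw [norm_eq, vec_zero, vec_one]; simp
      have hTBv : 0 < ‖T B (vec 0 1)‖ := by
        rw [norm_T, vec_zero, vec_one, hB]
        apply Real.sqrt_pos.mpr
        nlinarith [sq_nonneg ((0:ℝ) * 0 + B 1 1 * 1), hb1]
      rw [hv, mul_one] at this
      linarith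
    · -- A 0 0 > 0 : perturbation argument
      have hb0 : 0 < B 0 0 := lt_of_lt_of_le ha0 (hle 0 0)
      obtain ⟨ε, hεpos, key⟩ : ∃ ε : ℝ, 0 < ε ∧ A 0 0 ^ 2 * ε < B 0 0 * B 0 1 :=
        ⟨B 0 0 * B 0 1 / (A 0 0 ^ 2 + 1), by positivity, by
          rw [mul_div_assoc', div_lt_iff₀ (by positivity)]
          nlinarith [mul_pos hb0 hb1]⟩
      have hznorm : ‖vec 1 ε‖ = Real.sqrt (1 + ε ^ 2) := by
        rw [norm_eq, vec_zero, vec_one, one_pow]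
      have hzpos : 0 < ‖vec 1 ε‖ := by rw [hznorm]; positivity
      have hstep : A 0 0 * ‖vec 1 ε‖ < ‖T B (vec 1 ε)‖ := by
        rw [hznorm, norm_T, vec_zero, vec_one, hB]
        rw [show A 0 0 * Real.sqrt (1 + ε ^ 2) = Real.sqrt (A 0 0 ^ 2 * (1 + ε ^ 2)) by
          rw [Real.sqrt_mul (sq_nonneg _), Real.sqrt_sq ha0.le]]
        apply Real.sqrt_lt_sqrt (by positivity)
        have hab : A 0 0 ≤ B 0 0 := hle 0 0
        have e1 : A 0 0 ^ 2 ≤ B 0 0 ^ 2 := pow_le_pow_left₀ (hApos 0 0) hab 2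
        exact aux2 (A 0 0) (B 0 0) (B 0 1) (B 1 1) ε hεpos hb0 hb1 hab ha0 e1
          (aux1 (A 0 0) (B 0 0) (B 0 1) ε hεpos hb0 hb1 key)
      have hb2 : ‖T B (vec 1 ε)‖ ≤ ‖T B‖ * ‖vec 1 ε‖ := (T B).le_opNorm _
      show ‖T A‖ < ‖T B‖
      rw [hnormA]
      exact lt_of_mul_lt_mul_right (lt_of_lt_of_le hstep hb2) hzpos.le
end

section
/- Let A₁,...,A_N be 2×2 complex matrices with no common eigenvector. Then the quantity κ := min over unit vectors u, v of max over X ∈ {I, A₁,...,A_N} of |⟨Xu, v⟩| is strictly positive. -/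
/-- The maximum over X ∈ {I, A₁, …, A_N} of |⟨Xu, v⟩|. -/
noncomputable def maxInner {N : ℕ} (A : Fin N → Matrix (Fin 2) (Fin 2) ℂ)
    (u v : EuclideanSpace ℂ (Fin 2)) : ℝ :=
  ⨆ i : Option (Fin N), ‖(inner ℂ (Matrix.toEuclideanLin (i.elim 1 A) u) v : ℂ)‖

/-- κ := min over unit vectors u, v of maxInner A u v. -/
noncomputable def kappa {N : ℕ} (A : Fin N → Matrix (Fin 2) (Fin 2) ℂ) : ℝ :=
  sInf {r : ℝ | ∃ u v : EuclideanSpace ℂ (Fin 2), ‖u‖ = 1 ∧ ‖v‖ = 1 ∧ r = maxInner A u v}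

/-- A₁, …, A_N have a common eigenvector. -/
def HasCommonEigenvector {N : ℕ} (A : Fin N → Matrix (Fin 2) (Fin 2) ℂ) : Prop :=
  ∃ w : Fin 2 → ℂ, w ≠ 0 ∧ ∀ j, ∃ c : ℂ, (A j).mulVec w = c • w

theorem Submodule.span_singleton_eq_orthogonal_of_finrank_eq_two {𝕜 E : Type*} [RCLike 𝕜]
    [NormedAddCommGroup E] [InnerProductSpace 𝕜 E] (hE : Module.finrank 𝕜 E = 2) {u v : E}
    (hu : u ≠ 0) (hv : v ≠ 0) (huv : inner 𝕜 u v = 0) : (𝕜 ∙ u) = (𝕜 ∙ v)ᗮ := by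
  have : Fact (Module.finrank 𝕜 E = 1 + 1) := ⟨hE⟩
  have : FiniteDimensional 𝕜 E := .of_fact_finrank_eq_succ 1
  apply Submodule.eq_of_le_of_finrank_eq
  · rwa [Submodule.span_singleton_le_iff_mem, Submodule.mem_orthogonal_singleton_iff_inner_left]
  · rw [finrank_span_singleton hu, Submodule.finrank_orthogonal_span_singleton (n := 1) hv]

section maxInner

variable {N : ℕ} (A : Fin N → Matrix (Fin 2) (Fin 2) ℂ)

theorem norm_inner_le_maxInner (u v : EuclideanSpace ℂ (Fin 2)) (i : Option (Fin N)) :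
    ‖(inner ℂ (Matrix.toEuclideanLin (i.elim 1 A) u) v : ℂ)‖ ≤ maxInner A u v :=
  le_ciSup (f := fun i : Option (Fin N) =>
    ‖(inner ℂ (Matrix.toEuclideanLin (i.elim 1 A) u) v : ℂ)‖) (Set.finite_range _).bddAbove i

theorem hasCommonEigenvector_of_inner_eq_zero {u v : EuclideanSpace ℂ (Fin 2)}
    (hu : u ≠ 0) (hv : v ≠ 0)
    (hA : ∀ i : Option (Fin N), inner ℂ (Matrix.toEuclideanLin (i.elim 1 A) u) v = (0 : ℂ)) :
    HasCommonEigenvector A := by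
  have huv : inner ℂ u v = (0 : ℂ) := by simpa using hA none
  have hline := Submodule.span_singleton_eq_orthogonal_of_finrank_eq_two
    finrank_euclideanSpace_fin hu hv huv
  refine ⟨u.ofLp, by simpa using hu, fun j => ?_⟩
  have hAj : Matrix.toEuclideanLin (A j) u ∈ (ℂ ∙ v)ᗮ :=
    Submodule.mem_orthogonal_singleton_iff_inner_left.mpr (hA (some j))
  obtain ⟨c, hc⟩ := Submodule.mem_span_singleton.mp (hline ▸ hAj)
  exact ⟨c, by simpa [Matrix.toLpLin_apply] using congrArg WithLp.ofLp hc.symm⟩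

theorem maxInner_pos (h : ¬ HasCommonEigenvector A) {u v : EuclideanSpace ℂ (Fin 2)}
    (hu : u ≠ 0) (hv : v ≠ 0) : 0 < maxInner A u v := by
  refine (norm_nonneg _ |>.trans (norm_inner_le_maxInner A u v none)).lt_of_ne' fun h0 => h ?_
  refine hasCommonEigenvector_of_inner_eq_zero A hu hv fun i => norm_le_zero_iff.mp ?_
  exact h0 ▸ norm_inner_le_maxInner A u v i

theorem continuous_maxInner :
    Continuous fun p : EuclideanSpace ℂ (Fin 2) × EuclideanSpace ℂ (Fin 2) =>
      maxInner A p.1 p.2 := by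
  simp only [maxInner, ← Finset.sup'_univ_eq_ciSup]
  refine Continuous.finset_sup'_apply _ fun i _ => Continuous.norm ?_
  exact ((Matrix.toEuclideanLin (i.elim 1 A)).continuous_of_finiteDimensional.comp
    continuous_fst).inner continuous_snd

theorem exists_maxInner_eq_kappa :
    ∃ u v : EuclideanSpace ℂ (Fin 2), ‖u‖ = 1 ∧ ‖v‖ = 1 ∧ kappa A = maxInner A u v := by
  let S := Metric.sphere (0 : EuclideanSpace ℂ (Fin 2)) 1
  have hS : {r : ℝ | ∃ u v : EuclideanSpace ℂ (Fin 2), ‖u‖ = 1 ∧ ‖v‖ = 1 ∧ r = maxInner A u v}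
      = (fun p => maxInner A p.1 p.2) '' S ×ˢ S := by
    ext r
    simp [S, eq_comm]
  have hcompact : IsCompact ((fun p => maxInner A p.1 p.2) '' S ×ˢ S) :=
    ((isCompact_sphere 0 1).prod (isCompact_sphere 0 1)).image (continuous_maxInner A)
  have hne : (S ×ˢ S).Nonempty :=
    (NormedSpace.sphere_nonempty.mpr zero_le_one).prod (NormedSpace.sphere_nonempty.mpr zero_le_one)
  obtain ⟨⟨u, v⟩, ⟨hu, hv⟩, huv⟩ := hcompact.sInf_mem (hne.image _)
  exact ⟨u, v, mem_sphere_zero_iff_norm.mp hu, mem_sphere_zero_iff_norm.mp hv,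
    by rw [kappa, hS, ← huv]⟩

end maxInner

theorem stmt3_general {N : ℕ} (A : Fin N → Matrix (Fin 2) (Fin 2) ℂ)
    (h : ¬ HasCommonEigenvector A) : 0 < kappa A := by
  obtain ⟨u, v, hu, hv, hκ⟩ := exists_maxInner_eq_kappa A
  rw [hκ]
  exact maxInner_pos A h (norm_ne_zero_iff.mp (hu ▸ one_ne_zero))
    (norm_ne_zero_iff.mp (hv ▸ one_ne_zero))

/-- if A₁,…,A_N have no common eigenvector then κ > 0. -/
theorem stmt3 {N : ℕ} (hN : 0 < N) (A : Fin N → Matrix (Fin 2) (Fin 2) ℂ)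
    (h : ¬ HasCommonEigenvector A) : 0 < kappa A :=
  stmt3_general A h
end

section
/- Let B₁ = [[1, M],[0, λ]] and B₂ = [[λ, M],[0, 1]] with 0 < λ < 1 and M > 0. Then for every n ≥ 1 and every choice j₁,...,j_n ∈ {1, 2} containing exactly m instances of 1, the operator norm ‖B_{j_n}···B_{j_1}‖ is at most ‖B₁^m B₂^{n−m}‖. -/
/-- Product B_{σ(n)} ⋯ B_{σ(1)} of real 2×2 matrices. -/
noncomputable def prodWR {N : ℕ} (B : Fin N → Matrix (Fin 2) (Fin 2) ℝ) (σ : ℕ → Fin N) :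
    ℕ → Matrix (Fin 2) (Fin 2) ℝ
  | 0 => 1
  | n + 1 => B (σ (n + 1)) * prodWR B σ n

/-!
Every factor is upper triangular, so a word with `q` factors `B₁` and `p` factors `B₂` is
`!![λ^p, c; 0, λ^q]`, and inductively `0 ≤ c ≤ M (1 + ⋯ + λ^(p-1) + 1 + ⋯ + λ^(q-1))`. The right-hand
bound is exactly the upper-right entry of `B₁^q B₂^p`, and for matrices with nonnegative entries
the Euclidean operator norm is monotone in each entry.
-/

open Finset Matrix

lemma EuclideanSpace.norm_le_norm_of_abs_le {ι : Type*} [Fintype ι] {x y : EuclideanSpace ℝ ι}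
    (h : ∀ i, |x i| ≤ |y i|) : ‖x‖ ≤ ‖y‖ := by
  rw [EuclideanSpace.norm_eq, EuclideanSpace.norm_eq]
  gcongr with i
  exact h i

lemma Matrix.abs_mulVec_le {m n : Type*} [Fintype n] {A B : Matrix m n ℝ}
    (h : ∀ i j, |A i j| ≤ B i j) (x : n → ℝ) (i : m) :
    |(A *ᵥ x) i| ≤ (B *ᵥ fun j => |x j|) i :=
  calc |(A *ᵥ x) i| ≤ ∑ j, |A i j * x j| := abs_sum_le_sum_abs _ _
    _ ≤ (B *ᵥ fun j => |x j|) i := by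
      simp only [mulVec, dotProduct, abs_mul]
      gcongr with j
      exact h i j

lemma Matrix.norm_toEuclideanLin_le_of_abs_le {m n : Type*} [Fintype m] [Fintype n]
    [DecidableEq n] {A B : Matrix m n ℝ} (h : ∀ i j, |A i j| ≤ B i j) :
    ‖(toEuclideanLin A).toContinuousLinearMap‖ ≤ ‖(toEuclideanLin B).toContinuousLinearMap‖ := by
  refine ContinuousLinearMap.opNorm_le_bound _ (norm_nonneg _) fun x => ?_
  set xAbs : EuclideanSpace ℝ n := WithLp.toLp 2 fun j => |x j|
  have hxAbs : ‖xAbs‖ = ‖x‖ := by simp [xAbs, EuclideanSpace.norm_eq]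
  calc ‖(toEuclideanLin A).toContinuousLinearMap x‖
      ≤ ‖(toEuclideanLin B).toContinuousLinearMap xAbs‖ := by
        refine EuclideanSpace.norm_le_norm_of_abs_le fun i => ?_
        simp only [LinearMap.coe_toContinuousLinearMap', toLpLin_apply]
        exact (abs_mulVec_le h _ i).trans (le_abs_self _)
    _ ≤ _ := ContinuousLinearMap.le_opNorm _ _
    _ = _ := by rw [hxAbs]

lemma opNormR_upperTriangular_mono {a c c' d : ℝ} (ha : 0 ≤ a) (hd : 0 ≤ d) (hc : |c| ≤ c') :
    opNormR !![a, c; 0, d] ≤ opNormR !![a, c'; 0, d] := by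
  refine norm_toEuclideanLin_le_of_abs_le fun i j => ?_
  fin_cases i <;> fin_cases j <;> simp [abs_of_nonneg, ha, hd, hc]

lemma upperTriangular_mul_upperTriangular (a b d a' b' d' : ℝ) :
    !![a, b; 0, d] * !![a', b'; 0, d'] = !![a * a', a * b' + b * d'; 0, d * d'] := by
  simp

lemma upperTriangular_pow_of_topLeft_one (b d : ℝ) (k : ℕ) :
    !![1, b; 0, d] ^ k = !![1, b * ∑ i ∈ range k, d ^ i; 0, d ^ k] := by
  induction k with
  | zero => simp [one_fin_two]
  | succ k ih =>
    rw [pow_succ', ih, upperTriangular_mul_upperTriangular, geom_sum_succ', pow_succ']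
    simp only [one_mul, mul_one]
    ring_nf

lemma upperTriangular_pow_of_bottomRight_one (a b : ℝ) (k : ℕ) :
    !![a, b; 0, 1] ^ k = !![a ^ k, b * ∑ i ∈ range k, a ^ i; 0, 1] := by
  induction k with
  | zero => simp [one_fin_two]
  | succ k ih =>
    rw [pow_succ', ih, upperTriangular_mul_upperTriangular, geom_sum_succ, pow_succ']
    simp only [mul_one]
    ring_nf

def letterCount {N : ℕ} (σ : ℕ → Fin N) (j : Fin N) (n : ℕ) : ℕ :=
  #{k ∈ Icc 1 n | σ k = j}

lemma letterCount_succ {N : ℕ} (σ : ℕ → Fin N) (j : Fin N) (n : ℕ) :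
    letterCount σ j (n + 1) = letterCount σ j n + if σ (n + 1) = j then 1 else 0 := by
  simp only [letterCount, card_filter]
  exact sum_Icc_succ_top (by omega) _

lemma letterCount_zero_add_letterCount_one (σ : ℕ → Fin 2) (n : ℕ) :
    letterCount σ 0 n + letterCount σ 1 n = n := by
  induction n with
  | zero => rfl
  | succ n ih =>
    rw [letterCount_succ, letterCount_succ]
    split_ifs <;> omega

theorem exists_prodWR_eq_upperTriangular {M lam : ℝ} (hlam0 : 0 ≤ lam) (hlam1 : lam ≤ 1)
    (hM : 0 ≤ M) {B : Fin 2 → Matrix (Fin 2) (Fin 2) ℝ}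
    (hB0 : B 0 = !![(1 : ℝ), M; 0, lam]) (hB1 : B 1 = !![lam, M; 0, 1])
    (σ : ℕ → Fin 2) (n : ℕ) :
    ∃ c, prodWR B σ n = !![lam ^ letterCount σ 1 n, c; 0, lam ^ letterCount σ 0 n] ∧ 0 ≤ c ∧
      c ≤ M * (∑ i ∈ range (letterCount σ 1 n), lam ^ i +
        ∑ i ∈ range (letterCount σ 0 n), lam ^ i) := by
  induction n with
  | zero =>
    exact ⟨0, by simp [prodWR, letterCount, one_fin_two], le_rfl, by simp [letterCount]⟩
  | succ n ih =>
    obtain ⟨c, hprod, hc0, hc⟩ := ih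
    have hq : lam ^ letterCount σ 0 n ≤ 1 := pow_le_one₀ hlam0 hlam1
    have hSq : 0 ≤ ∑ i ∈ range (letterCount σ 0 n), lam ^ i :=
      sum_nonneg fun _ _ => pow_nonneg hlam0 _
    rw [prodWR, hprod, letterCount_succ, letterCount_succ]
    obtain h | h : σ (n + 1) = 0 ∨ σ (n + 1) = 1 := by omega
    · refine ⟨c + M * lam ^ letterCount σ 0 n, ?_, by positivity, ?_⟩
      · simp [h, hB0, pow_succ']
      · simp only [h, zero_ne_one, ↓reduceIte, add_zero, geom_sum_succ']
        linarith
    · refine ⟨lam * c + M * lam ^ letterCount σ 0 n, ?_, by positivity, ?_⟩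
      · simp [h, hB1, pow_succ']
      · simp only [h, one_ne_zero, ↓reduceIte, add_zero, geom_sum_succ]
        linarith [mul_le_mul_of_nonneg_left hc hlam0, mul_le_mul_of_nonneg_left hq hM,
          mul_le_mul_of_nonneg_right hlam1 (mul_nonneg hM hSq)]

theorem stmt8_general (M lam : ℝ) (hlam : 0 < lam) (hlam1 : lam < 1) (hM : 0 < M)
    (B : Fin 2 → Matrix (Fin 2) (Fin 2) ℝ)
    (hB0 : B 0 = !![(1 : ℝ), M; 0, lam]) (hB1 : B 1 = !![lam, M; 0, 1])
    (n : ℕ) (σ : ℕ → Fin 2)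
    (m : ℕ) (hm : m = ((Finset.Icc 1 n).filter (fun k => σ k = 0)).card) :
    opNormR (prodWR B σ n) ≤ opNormR (B 0 ^ m * B 1 ^ (n - m)) := by
  obtain ⟨c, hprod, hc0, hc⟩ :=
    exists_prodWR_eq_upperTriangular hlam.le hlam1.le hM.le hB0 hB1 σ n
  have hm' : m = letterCount σ 0 n := hm
  have hcount : n - m = letterCount σ 1 n := by
    have := letterCount_zero_add_letterCount_one σ n
    omega
  rw [hprod, hB0, hB1, hcount, hm', upperTriangular_pow_of_topLeft_one,
    upperTriangular_pow_of_bottomRight_one, upperTriangular_mul_upperTriangular]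
  simp only [one_mul, mul_one, ← mul_add]
  exact opNormR_upperTriangular_mono (by positivity) (by positivity)
    ((abs_of_nonneg hc0).trans_le hc)

/-- among products of B₁, B₂ with exactly m factors B₁ and n − m
factors B₂, the ordered product B₁^m B₂^(n−m) has maximal Euclidean operator norm. -/
theorem stmt8 (M lam : ℝ) (hlam : 0 < lam) (hlam1 : lam < 1) (hM : 0 < M)
    (B : Fin 2 → Matrix (Fin 2) (Fin 2) ℝ)
    (hB0 : B 0 = !![(1 : ℝ), M; 0, lam]) (hB1 : B 1 = !![lam, M; 0, 1])
    (n : ℕ) (hn : 1 ≤ n) (σ : ℕ → Fin 2)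
    (m : ℕ) (hm : m = ((Finset.Icc 1 n).filter (fun k => σ k = 0)).card) :
    opNormR (prodWR B σ n) ≤ opNormR (B 0 ^ m * B 1 ^ (n - m)) :=
  stmt8_general M lam hlam hlam1 hM B hB0 hB1 n σ m hm
end

section
/- Let A₁ = [[e^{iφ}, e^{iφ}−1],[0, 1]] and A₂ = [[e^{iψ}, 0],[0, 1]] where neither e^{iφ} nor e^{iψ} is a root of unity. Then there exists M ≥ 1 such that for every α ∈ ℂ there exist integers n, m with 1 ≤ n, m ≤ M such that the first coordinate β of the vector A₁^n A₂^m (α, 1)ᵀ satisfies |β| ≥ |α| + 1 (where the second coordinate remains 1). -/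
/-!
The first coordinate of `A₁ⁿ A₂ᵐ (α, 1)` is `e^{inφ} (e^{imψ} α + 1) - 1`. The powers of a
rotation that is not a root of unity are dense in the compact circle, so exponents in a fixed
range `1 ≤ n ≤ M` already come within `1/2` of every point. Choosing `m` so that `e^{imψ}`
turns `α` close to the positive real axis gives `|β| ≥ |α| + 1/2` for `β = e^{imψ} α + 1`;
choosing `n` so that `e^{inφ}` turns `β` close to the negative real axis gains another `1/2`
when `1` is subtracted.
-/

open Complex

theorem DenseRange.exists_forall_exists_le_dist_lt {X : Type*} [PseudoMetricSpace X]
    [CompactSpace X] {f : ℕ → X} (hf : DenseRange f) {ε : ℝ} (hε : 0 < ε) :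
    ∃ M, ∀ x, ∃ n ≤ M, dist x (f n) < ε := by
  let U : ℕ → Set X := fun M => ⋃ n ≤ M, Metric.ball (f n) ε
  have hcover : Set.univ ⊆ ⋃ M, U M := fun x _ =>
    let ⟨n, hn⟩ := hf.exists_dist_lt x hε
    Set.mem_iUnion.2 ⟨n, Set.mem_iUnion₂.2 ⟨n, le_rfl, hn⟩⟩
  have hmono : Monotone U := fun _ _ hMN =>
    Set.biUnion_mono (fun _ hn => le_trans hn hMN) fun _ _ => le_rfl
  obtain ⟨M, hM⟩ := isCompact_univ.elim_directed_cover U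
    (fun _ => isOpen_biUnion fun _ _ => Metric.isOpen_ball) hcover hmono.directed_le
  exact ⟨M, fun x => by simpa [U] using hM (Set.mem_univ x)⟩

namespace Circle

theorem denseRange_pow_of_pow_ne_one {z : Circle} (hz : ∀ k : ℕ, 0 < k → z ^ k ≠ 1) :
    DenseRange (z ^ · : ℕ → Circle) := by
  have : Fact ((0 : ℝ) < 1) := ⟨one_pos⟩
  let e := AddCircle.homeomorphCircle (T := 1) one_ne_zero
  have he : ∀ b, e b = AddCircle.toCircle b := AddCircle.homeomorphCircle_apply _
  obtain ⟨a, rfl⟩ := e.surjective z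
  have ha : addOrderOf a = 0 := by
    refine addOrderOf_eq_zero_iff'.2 fun k hk hka => hz k hk ?_
    rw [he, ← AddCircle.toCircle_nsmul, hka, AddCircle.toCircle_zero]
  have hpow : (e a ^ · : ℤ → Circle) = e ∘ (· • a) := by
    funext k
    simp only [Function.comp_apply, he, AddCircle.toCircle_zsmul]
  rw [← denseRange_zpow_iff_pow, hpow]
  exact e.surjective.denseRange.comp (AddCircle.denseRange_zsmul_iff.2 ha) e.continuous

theorem exists_forall_exists_pow_dist_lt {z : Circle} (hz : DenseRange (z ^ · : ℕ → Circle))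
    {ε : ℝ} (hε : 0 < ε) :
    ∃ M, 1 ≤ M ∧ ∀ w : Circle, ∃ n, 1 ≤ n ∧ n ≤ M ∧ dist w (z ^ n) < ε := by
  have hshift : DenseRange (fun n : ℕ => z ^ (n + 1)) := by
    simpa only [Function.comp_def, ← pow_succ'] using
      (mul_left_surjective z).denseRange.comp hz (continuous_const_mul z)
  obtain ⟨M, hM⟩ := hshift.exists_forall_exists_le_dist_lt hε
  refine ⟨M + 1, le_add_self, fun w => ?_⟩
  obtain ⟨n, hnM, hn⟩ := hM w
  exact ⟨n + 1, le_add_self, Nat.succ_le_succ hnM, hn⟩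

end Circle

theorem Complex.norm_add_half_le_norm_add_one {w : ℂ} (hw : ‖w - ‖w‖‖ ≤ ‖w‖ / 2) :
    ‖w‖ + 1 / 2 ≤ ‖w + 1‖ := by
  have hre : ‖w‖ / 2 ≤ w.re := by
    have := (abs_le.1 ((abs_re_le_norm _).trans hw)).1
    simp only [sub_re, ofReal_re] at this
    linarith
  have hsq : ‖w + 1‖ ^ 2 = ‖w‖ ^ 2 + 2 * w.re + 1 := by
    simp only [Complex.sq_norm, normSq_apply, add_re, add_im, one_re, one_im]
    ring
  nlinarith [norm_nonneg w, norm_nonneg (w + 1)]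

theorem Circle.exists_pow_norm_add_half_le_norm_pow_mul_add_one {z : Circle} {M : ℕ}
    (hM : ∀ w : Circle, ∃ n, 1 ≤ n ∧ n ≤ M ∧ dist w (z ^ n) < 1 / 2) (α : ℂ) :
    ∃ n, 1 ≤ n ∧ n ≤ M ∧ ‖α‖ + 1 / 2 ≤ ‖(z : ℂ) ^ n * α + 1‖ := by
  obtain ⟨n, hn1, hnM, hn⟩ := hM (Circle.exp (-arg α))
  refine ⟨n, hn1, hnM, ?_⟩
  have hnorm : ‖(z : ℂ) ^ n * α‖ = ‖α‖ := by simp [Circle.norm_coe]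
  have hrot : (Circle.exp (-arg α) : ℂ) * α = ‖α‖ := by
    conv_lhs => rw [← norm_mul_exp_arg_mul_I α]
    rw [Circle.coe_exp, mul_left_comm, ← Complex.exp_add]
    simp
  have hclose : ‖(z : ℂ) ^ n * α - ‖α‖‖ ≤ ‖α‖ / 2 := calc
    ‖(z : ℂ) ^ n * α - ‖α‖‖ = dist (Circle.exp (-arg α)) (z ^ n) * ‖α‖ := by
      rw [← hrot, ← sub_mul, norm_mul, norm_sub_rev]
      exact congrArg (· * ‖α‖) (dist_eq_norm (Circle.exp (-arg α) : ℂ) (z ^ n : Circle)).symm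
    _ ≤ ‖α‖ / 2 := by nlinarith [norm_nonneg α]
  rw [← hnorm]
  exact Complex.norm_add_half_le_norm_add_one (hnorm ▸ hclose)

namespace Matrix

variable {R : Type*} [CommRing R]

theorem fin_two_pow_sub_one (a : R) (n : ℕ) :
    !![a, a - 1; 0, 1] ^ n = !![a ^ n, a ^ n - 1; 0, 1] := by
  induction n with
  | zero => simp [one_fin_two]
  | succ n ih =>
    rw [pow_succ, ih, mul_fin_two]
    simp only [mul_zero, add_zero, mul_one, zero_mul, zero_add, pow_succ,
      EmbeddingLike.apply_eq_iff_eq, vecCons_inj, and_true, true_and]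
    ring

theorem fin_two_pow_diagonal (a : R) (n : ℕ) :
    !![a, 0; 0, 1] ^ n = !![a ^ n, 0; 0, 1] := by
  induction n with
  | zero => simp [one_fin_two]
  | succ n ih =>
    rw [pow_succ, ih, mul_fin_two]
    simp [pow_succ]

theorem fin_two_pow_mul_pow_mulVec_zero (a b x : R) (n m : ℕ) :
    ((!![a, a - 1; 0, 1] ^ n * !![b, 0; 0, 1] ^ m).mulVec ![x, 1]) 0 =
      a ^ n * (b ^ m * x + 1) - 1 := by
  rw [fin_two_pow_sub_one, fin_two_pow_diagonal, mul_fin_two]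
  simp only [mul_zero, add_zero, mul_one, zero_add, zero_mul, mulVec_cons, mulVec_empty,
    one_smul, Pi.add_apply, Pi.smul_apply, Function.comp_apply, cons_val_zero, head_cons, tail_cons, smul_eq_mul]
  ring

end Matrix

open Complex in
/-- the escape step. If neither e^{iφ} nor e^{iψ} is a root of unity
then there is a uniform M such that for every α the modulus of the first
coordinate can be increased by at least 1 using A₁ⁿA₂^m with 1 ≤ n, m ≤ M. -/
theorem stmt13 (φ ψ : ℝ)
    (hφ : ∀ k : ℕ, 0 < k → exp (φ * I) ^ k ≠ 1)
    (hψ : ∀ k : ℕ, 0 < k → exp (ψ * I) ^ k ≠ 1) :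
    ∃ M : ℕ, 1 ≤ M ∧ ∀ α : ℂ, ∃ n m : ℕ, 1 ≤ n ∧ n ≤ M ∧ 1 ≤ m ∧ m ≤ M ∧
      ‖α‖ + 1 ≤
        ‖((!![exp (φ * I), exp (φ * I) - 1; 0, 1] ^ n *
            !![exp (ψ * I), 0; 0, 1] ^ m).mulVec ![α, 1]) 0‖ := by
  have hdense : ∀ θ : ℝ, (∀ k : ℕ, 0 < k → exp (θ * I) ^ k ≠ 1) →
      DenseRange (Circle.exp θ ^ · : ℕ → Circle) := fun θ hθ =>
    Circle.denseRange_pow_of_pow_ne_one fun k hk h =>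
      hθ k hk (by simpa using congrArg ((↑) : Circle → ℂ) h)
  obtain ⟨Mφ, hMφ1, hMφ⟩ := Circle.exists_forall_exists_pow_dist_lt (hdense φ hφ) one_half_pos
  obtain ⟨Mψ, -, hMψ⟩ := Circle.exists_forall_exists_pow_dist_lt (hdense ψ hψ) one_half_pos
  refine ⟨max Mφ Mψ, hMφ1.trans (le_max_left _ _), fun α => ?_⟩
  obtain ⟨m, hm1, hmM, hβ⟩ := Circle.exists_pow_norm_add_half_le_norm_pow_mul_add_one hMψ α
  set β := (Circle.exp ψ : ℂ) ^ m * α + 1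
  obtain ⟨n, hn1, hnM, hγ⟩ := Circle.exists_pow_norm_add_half_le_norm_pow_mul_add_one hMφ (-β)
  refine ⟨n, m, hn1, hnM.trans (le_max_left _ _), hm1, hmM.trans (le_max_right _ _), ?_⟩
  rw [Matrix.fin_two_pow_mul_pow_mulVec_zero, ← Circle.coe_exp, ← Circle.coe_exp]
  rw [norm_neg, mul_neg, neg_add_eq_sub, norm_sub_rev] at hγ
  linarith
end
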